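/- Let Γ be a finite set of LTL formulas over AP and let φ be a HyperLTL_S[Γ] sentence. Then for every set L of traces, L ⊨ φ if and only if stfr_Γ(L) ⊨ HyperLTL(φ), where stfr_Γ(L) := {stfr_Γ(π) : π ∈ L}. -/
import Mathlib


set_option linter.unusedVariables false

open Classical

/-- A trace over a set `AP` of atomic propositions: an infinite word over `2^AP`. -/
abbrev Trace (AP : Type) : Type := ℕ → Set AP

/-- Syntax of LTL formulas over `AP` (with `⊤`). -/
inductive LTL (AP : Type) : Type where
  | tt   : LTL AP
  | atom : AP → LTL AP
  | neg  : LTL AP → LTL AP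
  | conj : LTL AP → LTL AP → LTL AP
  | next : LTL AP → LTL AP
  | untl : LTL AP → LTL AP → LTL AP
deriving DecidableEq

namespace LTL

/-- Satisfaction of an LTL formula on a pointed trace. -/
def Sat {AP : Type} : LTL AP → Trace AP → ℕ → Prop
  | tt, _, _ => True
  | atom p, π, i => p ∈ π i
  | neg θ, π, i => ¬ Sat θ π i
  | conj θ₁ θ₂, π, i => Sat θ₁ π i ∧ Sat θ₂ π i
  | next θ, π, i => Sat θ π (i + 1)
  | untl θ₁ θ₂, π, i => ∃ j, i ≤ j ∧ Sat θ₂ π j ∧ ∀ k, i ≤ k → k < j → Sat θ₁ π k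

def or {AP : Type} (a b : LTL AP) : LTL AP := neg (conj (neg a) (neg b))
def impl {AP : Type} (a b : LTL AP) : LTL AP := or (neg a) b
def iff {AP : Type} (a b : LTL AP) : LTL AP := conj (impl a b) (impl b a)
def ev {AP : Type} (a : LTL AP) : LTL AP := untl tt a
def alw {AP : Type} (a : LTL AP) : LTL AP := neg (ev (neg a))

def bigConj {AP : Type} : List (LTL AP) → LTL AP
  | [] => tt
  | θ :: l => conj θ (bigConj l)

def bigDisj {AP : Type} : List (LTL AP) → LTL AP
  | [] => neg tt
  | θ :: l => or θ (bigDisj l)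

/-- The subformulas of an LTL formula. -/
def subf {AP : Type} [DecidableEq AP] : LTL AP → Finset (LTL AP)
  | tt => {tt}
  | atom p => {atom p}
  | neg θ => insert (neg θ) (subf θ)
  | conj a b => insert (conj a b) (subf a ∪ subf b)
  | next θ => insert (next θ) (subf θ)
  | untl a b => insert (untl a b) (subf a ∪ subf b)

/-- Negation, identifying `¬¬θ` with `θ`. -/
def negId {AP : Type} : LTL AP → LTL AP
  | neg θ => θ
  | θ => neg θ

end LTL

/-- The closure of a finite set of LTL formulas: all subformulas and their
negations (identifying `¬¬θ` with `θ`). -/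
def clOf {AP : Type} [DecidableEq AP] (Γ : Finset (LTL AP)) : Finset (LTL AP) :=
  (Γ.biUnion LTL.subf) ∪ (Γ.biUnion LTL.subf).image LTL.negId

/-- Positions `h` and `k` of `π` disagree on the truth value of some formula of `Γ`. -/
def profDiff {AP : Type} (Γ : Set (LTL AP)) (π : Trace AP) (h k : ℕ) : Prop :=
  ∃ θ ∈ Γ, ¬ (LTL.Sat θ π h ↔ LTL.Sat θ π k)

/-- `IsStutterFact Γ π m f` : the increasing sequence of positions `f 0, f 1, …`
(of length `m + 1`, where `m ∈ ℕ∪{∞}`) is the Γ-stutter factorization of `π`: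
`f 0 = 0`; the sequence is strictly increasing (below `m`); the truth value of every
formula of `Γ` is constant on each segment `[f j, f (j+1))` for `j < m` and on the
final infinite segment `[f m, ∞)` when `m` is finite; and between two adjacent
segments the truth value of some formula of `Γ` changes. -/
def IsStutterFact {AP : Type} (Γ : Set (LTL AP)) (π : Trace AP) (m : ℕ∞) (f : ℕ → ℕ) : Prop :=
  f 0 = 0 ∧
  (∀ j : ℕ, (j : ℕ∞) < m → f j < f (j + 1)) ∧
  (∀ j : ℕ, (j : ℕ∞) < m → ∀ θ ∈ Γ, ∀ h k : ℕ,
      f j ≤ h → h < f (j + 1) → f j ≤ k → k < f (j + 1) →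
      (LTL.Sat θ π h ↔ LTL.Sat θ π k)) ∧
  (∀ mf : ℕ, m = (mf : ℕ∞) → ∀ θ ∈ Γ, ∀ h k : ℕ,
      f mf ≤ h → f mf ≤ k → (LTL.Sat θ π h ↔ LTL.Sat θ π k)) ∧
  (∀ j : ℕ, (j : ℕ∞) < m → ∃ θ ∈ Γ, (LTL.Sat θ π (f j) ↔ ¬ LTL.Sat θ π (f (j + 1))))

/-- The position component of the Γ-successor `succ_Γ(π, i)` of a pointed trace:
the first position of the segment (of the Γ-stutter factorization of `π`)
following the one containing `i`, if it exists, and `i + 1` otherwise. -/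
noncomputable def succPos {AP : Type} (Γ : Set (LTL AP)) (π : Trace AP) (i : ℕ) : ℕ :=
  if h : ∃ j, i < j ∧ profDiff Γ π i j then Nat.find h else i + 1

/-- The sequence of positions of `π` selected by the Γ-stutter trace of `π`. -/
noncomputable def stfrNth {AP : Type} (Γ : Set (LTL AP)) (π : Trace AP) : ℕ → ℕ
  | 0 => 0
  | k + 1 => succPos Γ π (stfrNth Γ π k)

/-- The Γ-stutter trace `stfr_Γ(π)` of `π`. -/
noncomputable def stfr {AP : Type} (Γ : Set (LTL AP)) (π : Trace AP) : Trace AP :=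
  fun k => π (stfrNth Γ π k)

/-- Syntax of LTL_S: LTL with stutter-relativized temporal modalities. -/
inductive LTLS (AP : Type) : Type where
  | tt    : LTLS AP
  | atom  : AP → LTLS AP
  | neg   : LTLS AP → LTLS AP
  | conj  : LTLS AP → LTLS AP → LTLS AP
  | nextR : Finset (LTL AP) → LTLS AP → LTLS AP
  | untlR : Finset (LTL AP) → LTLS AP → LTLS AP → LTLS AP

/-- Satisfaction of an LTL_S formula on a pointed trace. -/
def LTLS.Sat {AP : Type} : LTLS AP → Trace AP → ℕ → Prop
  | .tt, _, _ => True
  | .atom p, π, i => p ∈ π i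
  | .neg ψ, π, i => ¬ LTLS.Sat ψ π i
  | .conj a b, π, i => LTLS.Sat a π i ∧ LTLS.Sat b π i
  | .nextR Γ ψ, π, i => LTLS.Sat ψ π (succPos (↑Γ) π i)
  | .untlR Γ a b, π, i => ∃ j : ℕ,
      LTLS.Sat b π ((succPos (↑Γ : Set (LTL AP)) π)^[j] i) ∧
      ∀ k < j, LTLS.Sat a π ((succPos (↑Γ : Set (LTL AP)) π)^[k] i)

/-- A pointed trace assignment: maps each trace variable to a pointed trace. -/
abbrev PTA (AP V : Type) : Type := V → Trace AP × ℕ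

/-- The Γ-successor of a pointed trace assignment. -/
noncomputable def succA {AP V : Type} (Γ : Set (LTL AP)) (Δ : PTA AP V) : PTA AP V :=
  fun x => ((Δ x).1, succPos Γ (Δ x).1 (Δ x).2)

/-- Quantifier-free HyperLTL_S formulas over propositions `AP` and trace variables `V`. -/
inductive HSQF (AP V : Type) : Type where
  | tt    : HSQF AP V
  | atom  : AP → V → HSQF AP V
  | neg   : HSQF AP V → HSQF AP V
  | conj  : HSQF AP V → HSQF AP V → HSQF AP V
  | nextR : Finset (LTL AP) → HSQF AP V → HSQF AP V
  | untlR : Finset (LTL AP) → HSQF AP V → HSQF AP V → HSQF AP V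

namespace HSQF

/-- Satisfaction of a quantifier-free HyperLTL_S formula on a pointed trace assignment. -/
def Sat {AP V : Type} : HSQF AP V → PTA AP V → Prop
  | tt, _ => True
  | atom p x, Δ => p ∈ (Δ x).1 (Δ x).2
  | neg ψ, Δ => ¬ Sat ψ Δ
  | conj a b, Δ => Sat a Δ ∧ Sat b Δ
  | nextR Γ ψ, Δ => Sat ψ (succA (↑Γ) Δ)
  | untlR Γ a b, Δ => ∃ i : ℕ,
      Sat b ((succA (↑Γ : Set (LTL AP)))^[i] Δ) ∧
      ∀ k < i, Sat a ((succA (↑Γ : Set (LTL AP)))^[k] Δ)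

/-- Trace variables occurring in a quantifier-free HyperLTL_S formula. -/
def vars {AP V : Type} : HSQF AP V → Set V
  | tt => ∅
  | atom _ x => {x}
  | neg ψ => vars ψ
  | conj a b => vars a ∪ vars b
  | nextR _ ψ => vars ψ
  | untlR _ a b => vars a ∪ vars b

/-- The subscripts of the temporal modalities occurring in a formula. -/
def subs {AP V : Type} : HSQF AP V → Set (Finset (LTL AP))
  | tt => ∅
  | atom _ _ => ∅
  | neg ψ => subs ψ
  | conj a b => subs a ∪ subs b
  | nextR Γ ψ => insert Γ (subs ψ)
  | untlR Γ a b => insert Γ (subs a ∪ subs b)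

/-- `ψ` is in the fragment HyperLTL_S[Γ]: every modality subscript equals `Γ`. -/
def InFragment {AP V : Type} (Γ : Finset (LTL AP)) (ψ : HSQF AP V) : Prop :=
  ∀ s ∈ ψ.subs, s = Γ

/-- `ψ` is a one-variable formula. -/
def OneVar {AP V : Type} (ψ : HSQF AP V) : Prop := ∃ x : V, ψ.vars ⊆ {x}

/-- Replace every modality subscript by `∅`, yielding a HyperLTL formula. -/
def toHLTL {AP V : Type} : HSQF AP V → HSQF AP V
  | tt => tt
  | atom p x => atom p x
  | neg ψ => neg (toHLTL ψ)
  | conj a b => conj (toHLTL a) (toHLTL b)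
  | nextR _ ψ => nextR ∅ (toHLTL ψ)
  | untlR _ a b => untlR ∅ (toHLTL a) (toHLTL b)

end HSQF

/-- Boolean combinations of formulas satisfying a base predicate. -/
inductive BoolCombOf {AP V : Type} (P : HSQF AP V → Prop) : HSQF AP V → Prop
  | base {ψ} : P ψ → BoolCombOf P ψ
  | tt : BoolCombOf P .tt
  | neg {ψ} : BoolCombOf P ψ → BoolCombOf P (.neg ψ)
  | conj {a b} : BoolCombOf P a → BoolCombOf P b → BoolCombOf P (.conj a b)

/-- Trace quantifiers. -/
inductive Quant : Type where
  | ex  : Quant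
  | all : Quant
deriving DecidableEq

/-- Satisfaction of a block of trace quantifiers followed by a matrix `P`,
over a set `L` of traces, starting from the assignment `Δ`. -/
def SatPfx {AP V : Type} [DecidableEq V] (L : Set (Trace AP)) :
    List (Quant × V) → (PTA AP V → Prop) → PTA AP V → Prop
  | [], P, Δ => P Δ
  | (Quant.ex, x) :: qs, P, Δ => ∃ π ∈ L, SatPfx L qs P (Function.update Δ x (π, 0))
  | (Quant.all, x) :: qs, P, Δ => ∀ π ∈ L, SatPfx L qs P (Function.update Δ x (π, 0))

/-- A HyperLTL_S sentence: a quantifier prefix and a quantifier-free matrix. -/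
structure HSSentence (AP V : Type) : Type where
  pre : List (Quant × V)
  matrix : HSQF AP V

/-- The sentence is closed: quantified variables are pairwise distinct and
every trace variable of the matrix is bound by the prefix. -/
def HSSentence.Closed {AP V : Type} (φ : HSSentence AP V) : Prop :=
  (φ.pre.map Prod.snd).Nodup ∧ ∀ x ∈ φ.matrix.vars, x ∈ φ.pre.map Prod.snd

/-- `L ⊨ φ` for a HyperLTL_S sentence `φ` and a set `L` of traces. -/
def HSSentence.Models {AP V : Type} [DecidableEq V] (φ : HSSentence AP V)
    (L : Set (Trace AP)) : Prop :=
  ∀ Δ₀ : PTA AP V, SatPfx L φ.pre (fun Δ => φ.matrix.Sat Δ) Δ₀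

/-- A simple HyperLTL_S sentence: its matrix is a Boolean combination of
HyperLTL_S[Γ] formulas (for a common finite set `Γ` of LTL formulas) and of
one-variable quantifier-free formulas. -/
def HSSentence.Simple {AP V : Type} (φ : HSSentence AP V) : Prop :=
  ∃ Γ : Finset (LTL AP),
    BoolCombOf (fun ψ => ψ.InFragment Γ ∨ ψ.OneVar) φ.matrix

/-- A Kripke structure over `AP` with state type `S`. -/
structure Kripke (AP S : Type) : Type where
  init : Set S
  E : Set (S × S)
  total : ∀ s : S, ∃ t : S, (s, t) ∈ E
  V : S → Set AP

namespace Kripke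

/-- A path of a Kripke structure. -/
def IsPath {AP S : Type} (K : Kripke AP S) (ν : ℕ → S) : Prop :=
  ν 0 ∈ K.init ∧ ∀ i : ℕ, (ν i, ν (i + 1)) ∈ K.E

/-- The set of traces of a Kripke structure. -/
def Lang {AP S : Type} (K : Kripke AP S) : Set (Trace AP) :=
  {π | ∃ ν : ℕ → S, K.IsPath ν ∧ π = fun i => K.V (ν i)}

/-- The set of traces of `F`-fair paths of a Kripke structure. -/
def FairLang {AP S : Type} (K : Kripke AP S) (F : Set S) : Set (Trace AP) :=
  {π | ∃ ν : ℕ → S, K.IsPath ν ∧ (∀ N : ℕ, ∃ i, N ≤ i ∧ ν i ∈ F) ∧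
        π = fun i => K.V (ν i)}

end Kripke

/-- A finite Kripke structure over `AP` (states are `Fin n`). -/
structure FinKripke (AP : Type) : Type where
  n : ℕ
  K : Kripke AP (Fin n)

def FinKripke.Lang {AP : Type} (K : FinKripke AP) : Set (Trace AP) := K.K.Lang

def FinKripke.FairLang {AP : Type} (K : FinKripke AP) (F : Set (Fin K.n)) :
    Set (Trace AP) := K.K.FairLang F

/-- A nondeterministic Büchi automaton over alphabet `Sig` (finitely many states). -/
structure NBA (Sig : Type) : Type where
  n : ℕ
  init : Set (Fin n)
  trans : Set (Fin n × Sig × Fin n)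
  acc : Set (Fin n)

/-- The ω-language of an NBA. -/
def NBA.Lang {Sig : Type} (A : NBA Sig) : Set (ℕ → Sig) :=
  {w | ∃ ρ : ℕ → Fin A.n, ρ 0 ∈ A.init ∧ (∀ i : ℕ, (ρ i, w i, ρ (i + 1)) ∈ A.trans) ∧
        ∀ N : ℕ, ∃ i, N ≤ i ∧ ρ i ∈ A.acc}

/-- Positive Boolean formulas over `X`. -/
inductive PosBool (X : Type) : Type where
  | tt   : PosBool X
  | ff   : PosBool X
  | var  : X → PosBool X
  | por  : PosBool X → PosBool X → PosBool X
  | pand : PosBool X → PosBool X → PosBool X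

/-- Satisfaction of a positive Boolean formula by a set of variables. -/
def PosBool.SatBy {X : Type} (S : Set X) : PosBool X → Prop
  | .tt => True
  | .ff => False
  | .var x => x ∈ S
  | .por a b => a.SatBy S ∨ b.SatBy S
  | .pand a b => a.SatBy S ∧ b.SatBy S

/-- A Büchi alternating asynchronous word automaton with `m` directions (an `mAAWA`)
over alphabet `Sig`, with finitely many states. -/
structure AAWA (Sig : Type) (m : ℕ) : Type where
  n : ℕ
  init : Fin n
  trans : Fin n → (Fin m → Sig) → PosBool (Fin n × Fin m)
  acc : Set (Fin n)

/-- A run of an `mAAWA` over an `m`-tuple of infinite words: a `(Q × ℕ^m)`-labeled tree. -/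
structure AAWARun {Sig : Type} {m : ℕ} (A : AAWA Sig m) (w : Fin m → (ℕ → Sig)) : Type where
  T : Set (List ℕ)
  Lab : List ℕ → Fin A.n × (Fin m → ℕ)
  rootMem : [] ∈ T
  pclosed : ∀ τ ∈ T, ∀ σ : List ℕ, σ <+: τ → σ ∈ T
  rootLab : Lab [] = (A.init, fun _ => 0)
  step : ∀ τ ∈ T, ∃ (k : ℕ) (c : Fin k → Fin A.n × Fin m),
      (A.trans (Lab τ).1 (fun d => w d ((Lab τ).2 d))).SatBy (Set.range c) ∧
      (∀ j : ℕ, τ ++ [j] ∈ T ↔ j < k) ∧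
      ∀ j : Fin k, Lab (τ ++ [j.1]) =
        ((c j).1, fun d => if d = (c j).2 then (Lab τ).2 d + 1 else (Lab τ).2 d)

/-- The node of a branch at depth `i`. -/
def branchPrefix (b : ℕ → ℕ) (i : ℕ) : List ℕ := (List.range i).map b

/-- `b` describes an infinite branch of the run tree. -/
def AAWARun.IsBranch {Sig : Type} {m : ℕ} {A : AAWA Sig m} {w : Fin m → (ℕ → Sig)}
    (r : AAWARun A w) (b : ℕ → ℕ) : Prop :=
  ∀ i : ℕ, branchPrefix b i ∈ r.T

/-- A run is accepting if every infinite branch visits accepting states infinitely often. -/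
def AAWARun.Accepting {Sig : Type} {m : ℕ} {A : AAWA Sig m} {w : Fin m → (ℕ → Sig)}
    (r : AAWARun A w) : Prop :=
  ∀ b : ℕ → ℕ, r.IsBranch b → ∀ N : ℕ, ∃ i, N ≤ i ∧ (r.Lab (branchPrefix b i)).1 ∈ A.acc

/-- The language of an `mAAWA`: the `m`-tuples of infinite words admitting an accepting run. -/
def AAWA.Lang {Sig : Type} {m : ℕ} (A : AAWA Sig m) : Set (Fin m → (ℕ → Sig)) :=
  {w | ∃ r : AAWARun A w, r.Accepting}

/-- `A` is `k`-synchronous: in every run the reading heads stay within distance `k`. -/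
def AAWA.Synchronous {Sig : Type} {m : ℕ} (A : AAWA Sig m) (k : ℕ) : Prop :=
  ∀ (w : Fin m → (ℕ → Sig)) (r : AAWARun A w), ∀ τ ∈ r.T, ∀ d d' : Fin m,
    (r.Lab τ).2 d ≤ (r.Lab τ).2 d' + k

/-- Quantifier-free HyperLTL_C formulas over propositions `AP` and trace variables `V`:
HyperLTL extended with context modalities `⟨C⟩` for nonempty sets `C` of trace variables. -/
inductive HCQF (AP V : Type) : Type where
  | tt   : HCQF AP V
  | atom : AP → V → HCQF AP V
  | neg  : HCQF AP V → HCQF AP V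
  | conj : HCQF AP V → HCQF AP V → HCQF AP V
  | next : HCQF AP V → HCQF AP V
  | untl : HCQF AP V → HCQF AP V → HCQF AP V
  | ctx  : (C : Set V) → C.Nonempty → HCQF AP V → HCQF AP V

/-- `Δ +_C i` : advance by `i` the positions of the pointed traces assigned to
the variables in the context `C`, leaving the others unchanged. -/
noncomputable def shiftA {AP V : Type} (Δ : PTA AP V) (C : Set V) (i : ℕ) : PTA AP V :=
  fun x => if x ∈ C then ((Δ x).1, (Δ x).2 + i) else Δ x

namespace HCQF

/-- Satisfaction `(Δ, C) ⊨ ψ` of a quantifier-free HyperLTL_C formula. -/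
def Sat {AP V : Type} : HCQF AP V → PTA AP V → Set V → Prop
  | tt, _, _ => True
  | atom p x, Δ, _ => p ∈ (Δ x).1 (Δ x).2
  | neg ψ, Δ, C => ¬ Sat ψ Δ C
  | conj a b, Δ, C => Sat a Δ C ∧ Sat b Δ C
  | next ψ, Δ, C => Sat ψ (shiftA Δ C 1) C
  | untl a b, Δ, C => ∃ i : ℕ, Sat b (shiftA Δ C i) C ∧ ∀ k < i, Sat a (shiftA Δ C k) C
  | ctx C' _ ψ, Δ, _ => Sat ψ Δ C'

/-- Trace variables occurring in a quantifier-free HyperLTL_C formula. -/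
def vars {AP V : Type} : HCQF AP V → Set V
  | tt => ∅
  | atom _ x => {x}
  | neg ψ => vars ψ
  | conj a b => vars a ∪ vars b
  | next ψ => vars ψ
  | untl a b => vars a ∪ vars b
  | ctx _ _ ψ => vars ψ

/-- The set of subformulas of a quantifier-free HyperLTL_C formula. -/
def subf {AP V : Type} : HCQF AP V → Set (HCQF AP V)
  | tt => {tt}
  | atom p x => {atom p x}
  | neg ψ => insert (neg ψ) (subf ψ)
  | conj a b => insert (conj a b) (subf a ∪ subf b)
  | next ψ => insert (next ψ) (subf ψ)
  | untl a b => insert (untl a b) (subf a ∪ subf b)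
  | ctx C h ψ => insert (ctx C h ψ) (subf ψ)

/-- The size of a formula: its number of distinct subformulas. -/
noncomputable def size {AP V : Type} (ψ : HCQF AP V) : ℕ := ψ.subf.ncard

/-- Nesting depth of context modalities. -/
def ctxDepth {AP V : Type} : HCQF AP V → ℕ
  | tt => 0
  | atom _ _ => 0
  | neg ψ => ctxDepth ψ
  | conj a b => max (ctxDepth a) (ctxDepth b)
  | next ψ => ctxDepth ψ
  | untl a b => max (ctxDepth a) (ctxDepth b)
  | ctx _ _ ψ => ctxDepth ψ + 1

/-- Auxiliary predicate for the bounded fragment. `glob` is the set of all trace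
variables occurring in the formula of interest (a context `C` is global iff
`glob ⊆ C`); the flag records whether the current position is in the scope of a
non-global context modality, where only the temporal modality `X` is allowed. -/
def BoundedAux {AP V : Type} (glob : Set V) : Bool → HCQF AP V → Prop
  | _, tt => True
  | _, atom _ _ => True
  | t, neg ψ => BoundedAux glob t ψ
  | t, conj a b => BoundedAux glob t a ∧ BoundedAux glob t b
  | t, next ψ => BoundedAux glob t ψ
  | false, untl a b => BoundedAux glob false a ∧ BoundedAux glob false b
  | true, untl _ _ => False
  | t, ctx C _ ψ => (glob ⊆ C → BoundedAux glob false ψ) ∧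
                    (¬ glob ⊆ C → BoundedAux glob true ψ)

/-- `ψ` is bounded: the only temporal modality occurring in (the scope of) a
non-global context is the next modality `X`. -/
def IsBounded {AP V : Type} (ψ : HCQF AP V) : Prop := BoundedAux ψ.vars false ψ

/-- Auxiliary predicate for the fragment where each temporal modality occurring in
(the scope of) a non-global context is the eventually modality `F` (i.e. `⊤ U ·`). -/
def FOnlyAux {AP V : Type} (glob : Set V) : Bool → HCQF AP V → Prop
  | _, tt => True
  | _, atom _ _ => True
  | t, neg ψ => FOnlyAux glob t ψ
  | t, conj a b => FOnlyAux glob t a ∧ FOnlyAux glob t b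
  | false, next ψ => FOnlyAux glob false ψ
  | true, next _ => False
  | false, untl a b => FOnlyAux glob false a ∧ FOnlyAux glob false b
  | true, untl a b => a = tt ∧ FOnlyAux glob true b
  | t, ctx C _ ψ => (glob ⊆ C → FOnlyAux glob false ψ) ∧
                    (¬ glob ⊆ C → FOnlyAux glob true ψ)

/-- Every temporal modality occurring in the scope of a non-global context
modality is the eventually modality `F`. -/
def FOnlyInNonGlobal {AP V : Type} (glob : Set V) (ψ : HCQF AP V) : Prop :=
  FOnlyAux glob false ψ

end HCQF

/-- A HyperLTL_C sentence: a quantifier prefix and a quantifier-free matrix. -/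
structure HCSentence (AP V : Type) : Type where
  pre : List (Quant × V)
  matrix : HCQF AP V

/-- The sentence is closed: quantified variables are pairwise distinct and every
trace variable of the matrix is bound by the prefix. -/
def HCSentence.Closed {AP V : Type} (φ : HCSentence AP V) : Prop :=
  (φ.pre.map Prod.snd).Nodup ∧ ∀ x ∈ φ.matrix.vars, x ∈ φ.pre.map Prod.snd

/-- `L ⊨ φ` for a HyperLTL_C sentence `φ` and a set `L` of traces
(the matrix is evaluated in the global context `VAR`). -/
def HCSentence.Models {AP V : Type} [DecidableEq V] (φ : HCSentence AP V)
    (L : Set (Trace AP)) : Prop :=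
  ∀ Δ₀ : PTA AP V, SatPfx L φ.pre (fun Δ => φ.matrix.Sat Δ Set.univ) Δ₀

/-- An instance of Post's Correspondence Problem over the alphabet `A`:
`2 * n` nonempty finite words. -/
structure PCPInstance (A : Type) : Type where
  n : ℕ
  npos : 0 < n
  word : Fin 2 → Fin n → List A
  ne : ∀ (ℓ : Fin 2) (i : Fin n), word ℓ i ≠ []

/-- The PCP instance has a solution. -/
def PCPInstance.HasSolution {A : Type} (P : PCPInstance A) : Prop :=
  ∃ is : List (Fin P.n), is ≠ [] ∧
    (is.map (P.word 0)).flatten = (is.map (P.word 1)).flatten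

/-- Atomic propositions used in the PCP reduction:
`AP = Σ ∪ {#} ∪ {p₁,…,pₙ} ∪ {q₁,q₂}`. -/
inductive PCPAP (A : Type) (n : ℕ) : Type where
  | sym  : A → PCPAP A n
  | hash : PCPAP A n
  | pvar : Fin n → PCPAP A n
  | qvar : Fin 2 → PCPAP A n
deriving DecidableEq

/-- `[u, p_i, q_ℓ]` : the word `u` marked with `p_i` and `q_ℓ`, whose last letter is
additionally marked with `#`. -/
def markWord {A : Type} {n : ℕ} (i : Fin n) (ℓ : Fin 2) : List A → List (Set (PCPAP A n))
  | [] => []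
  | [a] => [{PCPAP.sym a, PCPAP.pvar i, PCPAP.qvar ℓ, PCPAP.hash}]
  | a :: b :: rest => ({PCPAP.sym a, PCPAP.pvar i, PCPAP.qvar ℓ} : Set (PCPAP A n)) ::
      markWord i ℓ (b :: rest)

/-- The trace consisting of the finite word `l` followed by the trace `tail`. -/
def listToTrace {A : Type} (l : List (Set A)) (tail : Trace A) : Trace A :=
  fun k => if h : k < l.length then l.get ⟨k, h⟩ else tail (k - l.length)

/-- The well-formed trace `π^ℓ_{i₁,…,i_k} = {#}·[u^ℓ_{i₁},p_{i₁},q_ℓ]⋯[u^ℓ_{i_k},p_{i_k},q_ℓ]·{#}^ω`. -/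
def wfTrace {A : Type} (P : PCPInstance A) (ℓ : Fin 2) (is : List (Fin P.n)) :
    Trace (PCPAP A P.n) :=
  listToTrace (({PCPAP.hash} : Set (PCPAP A P.n)) ::
      (is.map fun i => markWord i ℓ (P.word ℓ i)).flatten)
    (fun _ => {PCPAP.hash})

/-- A well-formed trace for the PCP instance `P`. -/
def IsWellFormed {A : Type} (P : PCPInstance A) (π : Trace (PCPAP A P.n)) : Prop :=
  ∃ (ℓ : Fin 2) (is : List (Fin P.n)), is ≠ [] ∧ π = wfTrace P ℓ is

/-- The set `Γ = {#, p₁, …, pₙ}` of atomic propositions. -/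
def pcpGammaProp (A : Type) (n : ℕ) : Set (PCPAP A n) :=
  {x | x = PCPAP.hash ∨ ∃ i : Fin n, x = PCPAP.pvar i}

/-- The set `Γ = {#, p₁, …, pₙ}` regarded as a set of LTL formulas. -/
def pcpGammaLTL (A : Type) (n : ℕ) : Set (LTL (PCPAP A n)) :=
  LTL.atom '' pcpGammaProp A n

/-- The set `Γ = {#, p₁, …, pₙ}` as a finite set of LTL formulas. -/
def pcpGammaFinset (A : Type) [DecidableEq A] (n : ℕ) : Finset (LTL (PCPAP A n)) :=
  insert (LTL.atom PCPAP.hash)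
    ((Finset.univ : Finset (Fin n)).image fun i => LTL.atom (PCPAP.pvar i))

/-- Instructions of a Minsky 2-counter machine. -/
inductive MOp : Type where
  | inc  : MOp
  | dec  : MOp
  | zero : MOp
deriving DecidableEq

/-- A Minsky 2-counter machine (locations are `Fin nQ`; no transition leaves the
halting location). -/
structure Minsky : Type where
  nQ : ℕ
  qinit : Fin nQ
  qhalt : Fin nQ
  trans : Set (Fin nQ × (MOp × Fin 2) × Fin nQ)
  halt_no_out : ∀ q op q', (q, op, q') ∈ trans → q ≠ qhalt

/-- The one-step relation between configurations of a Minsky machine. -/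
def Minsky.Step (M : Minsky) (c c' : Fin M.nQ × (Fin 2 → ℕ)) : Prop :=
  ∃ (op : MOp) (cnt : Fin 2), (c.1, (op, cnt), c'.1) ∈ M.trans ∧
    (∀ d : Fin 2, d ≠ cnt → c'.2 d = c.2 d) ∧
    (match op with
      | MOp.inc => c'.2 cnt = c.2 cnt + 1
      | MOp.dec => 0 < c.2 cnt ∧ c'.2 cnt + 1 = c.2 cnt
      | MOp.zero => c.2 cnt = 0 ∧ c'.2 cnt = 0)

/-- The machine halts: some computation from the initial configuration reaches the
halting location. -/
def Minsky.Halts (M : Minsky) : Prop :=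
  ∃ c : Fin M.nQ × (Fin 2 → ℕ),
    Relation.ReflTransGen M.Step (M.qinit, fun _ => 0) c ∧ c.1 = M.qhalt

/-- Projection of a trace over `AP ⊕ B` onto `AP`. -/
def projSum {AP B : Type} (w : Trace (AP ⊕ B)) : Trace AP :=
  fun i => {p | Sum.inl p ∈ w i}

/-- The proposition `at(θ)` associated with an LTL formula (`at(p) = p` for atoms). -/
def atProp {AP : Type} : LTL AP → AP ⊕ LTL AP
  | LTL.atom p => Sum.inl p
  | θ => Sum.inr θ

section Aux

variable {AP V : Type}

lemma succPos_empty (π : Trace AP) (i : ℕ) :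
    succPos (∅ : Set (LTL AP)) π i = i + 1 := by
  simp [succPos, profDiff]

lemma stfrNth_eq_iterate (Γ : Set (LTL AP)) (π : Trace AP) (k : ℕ) :
    stfrNth Γ π k = (succPos Γ π)^[k] 0 := by
  induction k with
  | zero => rfl
  | succ k ih => rw [stfrNth, ih, Function.iterate_succ_apply']

lemma iterate_succA (Γ : Set (LTL AP)) (Δ : PTA AP V) (i : ℕ) :
    (succA Γ)^[i] Δ = fun x => ((Δ x).1, (succPos Γ (Δ x).1)^[i] (Δ x).2) := by
  induction i with
  | zero => rfl
  | succ i ih =>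
    rw [Function.iterate_succ_apply', ih]
    funext x
    simp [succA, Function.iterate_succ_apply']

lemma sat_congr {ψ : HSQF AP V} :
    ∀ {Δ Δ' : PTA AP V}, (∀ x ∈ ψ.vars, Δ x = Δ' x) → (ψ.Sat Δ ↔ ψ.Sat Δ') := by
  induction ψ with
  | tt => intro _ _ _; rfl
  | atom p x =>
    intro Δ Δ' h
    have := h x (by simp [HSQF.vars])
    simp [HSQF.Sat, this]
  | neg ψ ih =>
    intro Δ Δ' h
    simp only [HSQF.Sat]
    exact not_congr (ih h)
  | conj a b iha ihb =>
    intro Δ Δ' h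
    simp only [HSQF.Sat]
    exact and_congr (iha fun x hx => h x (Or.inl hx)) (ihb fun x hx => h x (Or.inr hx))
  | nextR Γ ψ ih =>
    intro Δ Δ' h
    simp only [HSQF.Sat]
    exact ih fun x hx => by simp [succA, h x hx]
  | untlR Γ a b iha ihb =>
    intro Δ Δ' h
    simp only [HSQF.Sat]
    constructor
    · rintro ⟨i, hb, ha⟩
      refine ⟨i, (ihb ?_).mp hb, fun k hk => (iha ?_).mp (ha k hk)⟩
      · intro x hx; simp [iterate_succA, h x (Or.inr hx)]
      · intro x hx; simp [iterate_succA, h x (Or.inl hx)]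
    · rintro ⟨i, hb, ha⟩
      refine ⟨i, (ihb ?_).mpr hb, fun k hk => (iha ?_).mpr (ha k hk)⟩
      · intro x hx; simp [iterate_succA, h x (Or.inr hx)]
      · intro x hx; simp [iterate_succA, h x (Or.inl hx)]

lemma vars_toHLTL (ψ : HSQF AP V) : ψ.toHLTL.vars = ψ.vars := by
  induction ψ <;> simp [HSQF.toHLTL, HSQF.vars, *]

lemma main_lemma (Γ : Finset (LTL AP)) {ψ : HSQF AP V} (hfr : ψ.InFragment Γ) :
    ∀ (τ : V → Trace AP) (k : ℕ),
      ψ.Sat (fun x => (τ x, (succPos (↑Γ) (τ x))^[k] 0)) ↔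
        ψ.toHLTL.Sat (fun x => (stfr (↑Γ) (τ x), k)) := by
  induction ψ with
  | tt => intro τ k; rfl
  | atom p x =>
    intro τ k
    simp [HSQF.Sat, HSQF.toHLTL, stfr, stfrNth_eq_iterate]
  | neg ψ ih =>
    intro τ k
    simp only [HSQF.Sat, HSQF.toHLTL]
    exact not_congr (ih hfr τ k)
  | conj a b iha ihb =>
    intro τ k
    simp only [HSQF.Sat, HSQF.toHLTL]
    exact and_congr (iha (fun s hs => hfr s (Or.inl hs)) τ k)
      (ihb (fun s hs => hfr s (Or.inr hs)) τ k)
  | nextR Γ' ψ ih =>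
    intro τ k
    have hΓ : Γ' = Γ := hfr Γ' (Or.inl rfl)
    subst hΓ
    have hfr' : ψ.InFragment Γ' := fun s hs => hfr s (Or.inr hs)
    simp only [HSQF.Sat, HSQF.toHLTL]
    have e1 : succA (↑Γ') (fun x => (τ x, (succPos (↑Γ') (τ x))^[k] 0))
        = fun x => (τ x, (succPos (↑Γ') (τ x))^[k+1] 0) := by
      funext x; simp [succA, Function.iterate_succ_apply']
    have e2 : succA (↑(∅ : Finset (LTL AP))) (fun x => (stfr (↑Γ') (τ x), k))
        = fun x => (stfr (↑Γ') (τ x), k + 1) := by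
      funext x; simp [succA, succPos_empty]
    rw [e1, e2]
    exact ih hfr' τ (k + 1)
  | untlR Γ' a b iha ihb =>
    intro τ k
    have hΓ : Γ' = Γ := hfr Γ' (Or.inl rfl)
    subst hΓ
    have hfa : a.InFragment Γ' := fun s hs => hfr s (Or.inr (Or.inl hs))
    have hfb : b.InFragment Γ' := fun s hs => hfr s (Or.inr (Or.inr hs))
    simp only [HSQF.Sat, HSQF.toHLTL]
    have e1 : ∀ i : ℕ, (succA (↑Γ' : Set (LTL AP)))^[i] (fun x => (τ x, (succPos (↑Γ') (τ x))^[k] 0))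
        = fun x => (τ x, (succPos (↑Γ') (τ x))^[k+i] 0) := by
      intro i
      rw [iterate_succA]
      funext x
      simp [← Function.iterate_add_apply, Nat.add_comm]
    have e2 : ∀ i : ℕ, (succA (↑(∅ : Finset (LTL AP)) : Set (LTL AP)))^[i]
          (fun x => (stfr (↑Γ' : Finset (LTL AP)) (τ x), k))
        = fun x => (stfr (↑Γ' : Finset (LTL AP)) (τ x), k + i) := by
      intro i
      rw [iterate_succA]
      funext x
      simp only []
      congr 1
      have : ∀ j m : ℕ, (succPos (↑(∅ : Finset (LTL AP)) : Set (LTL AP)) (stfr (↑Γ') (τ x)))^[j] m = m + j := by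
        intro j
        induction j with
        | zero => intro m; rfl
        | succ j ihj =>
          intro m
          rw [Function.iterate_succ_apply', ihj]
          simp [succPos_empty, Nat.add_assoc]
      exact this i k
    constructor
    · rintro ⟨i, hb, ha⟩
      rw [e1 i] at hb
      refine ⟨i, ?_, fun j hj => ?_⟩
      · rw [e2 i]; exact (ihb hfb τ (k + i)).mp hb
      · have := ha j hj
        rw [e1 j] at this
        rw [e2 j]
        exact (iha hfa τ (k + j)).mp this
    · rintro ⟨i, hb, ha⟩
      rw [e2 i] at hb
      refine ⟨i, ?_, fun j hj => ?_⟩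
      · rw [e1 i]; exact (ihb hfb τ (k + i)).mpr hb
      · have := ha j hj
        rw [e2 j] at this
        rw [e1 j]
        exact (iha hfa τ (k + j)).mpr this

lemma matrix_corr (Γ : Finset (LTL AP)) {ψ : HSQF AP V} (hfr : ψ.InFragment Γ)
    {Δ Δ' : PTA AP V}
    (h : ∀ x ∈ ψ.vars, (Δ x).2 = 0 ∧ Δ' x = (stfr (↑Γ) (Δ x).1, 0)) :
    ψ.Sat Δ ↔ ψ.toHLTL.Sat Δ' := by
  set τ : V → Trace AP := fun x => (Δ x).1 with hτ
  have h1 : ψ.Sat Δ ↔ ψ.Sat (fun x => (τ x, (succPos (↑Γ) (τ x))^[0] 0)) := by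
    apply sat_congr
    intro x hx
    have := (h x hx).1
    simp [hτ]
    exact Prod.ext rfl this
  have h2 : ψ.toHLTL.Sat Δ' ↔ ψ.toHLTL.Sat (fun x => (stfr (↑Γ) (τ x), 0)) := by
    apply sat_congr
    intro x hx
    rw [vars_toHLTL] at hx
    exact (h x hx).2
  rw [h1, h2]
  exact main_lemma Γ hfr τ 0

lemma pfx_corr [DecidableEq V] (Γ : Finset (LTL AP)) {ψ : HSQF AP V}
    (hfr : ψ.InFragment Γ) (L : Set (Trace AP)) :
    ∀ (qs : List (Quant × V)) (Δ Δ' : PTA AP V),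
      (∀ x ∈ ψ.vars, x ∈ qs.map Prod.snd ∨
        ((Δ x).2 = 0 ∧ Δ' x = (stfr (↑Γ) (Δ x).1, 0))) →
      (SatPfx L qs (fun Δ => ψ.Sat Δ) Δ ↔
        SatPfx (stfr (↑Γ) '' L) qs (fun Δ => ψ.toHLTL.Sat Δ) Δ') := by
  intro qs
  induction qs with
  | nil =>
    intro Δ Δ' h
    simp only [SatPfx]
    apply matrix_corr Γ hfr
    intro x hx
    rcases h x hx with h' | h'
    · simp at h'
    · exact h'
  | cons q qs ih =>
    obtain ⟨qq, x⟩ := q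
    intro Δ Δ' h
    cases qq with
    | ex =>
      simp only [SatPfx]
      constructor
      · rintro ⟨π, hπ, hs⟩
        refine ⟨stfr (↑Γ) π, ⟨π, hπ, rfl⟩, ?_⟩
        refine (ih (Function.update Δ x (π, 0)) (Function.update Δ' x (stfr (↑Γ) π, 0)) ?_).mp hs
        intro y hy
        by_cases hyx : y = x
        · subst hyx; right; simp
        · rcases h y hy with h' | h'
          · simp only [List.map_cons, List.mem_cons] at h'
            rcases h' with h'' | h''
            · exact absurd h'' hyx
            · exact Or.inl h''
          · right; simpa [Function.update_of_ne hyx] using h'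
      · rintro ⟨π', ⟨π, hπ, rfl⟩, hs⟩
        refine ⟨π, hπ, ?_⟩
        refine (ih (Function.update Δ x (π, 0)) (Function.update Δ' x (stfr (↑Γ) π, 0)) ?_).mpr hs
        intro y hy
        by_cases hyx : y = x
        · subst hyx; right; simp
        · rcases h y hy with h' | h'
          · simp only [List.map_cons, List.mem_cons] at h'
            rcases h' with h'' | h''
            · exact absurd h'' hyx
            · exact Or.inl h''
          · right; simpa [Function.update_of_ne hyx] using h'
    | all =>
      simp only [SatPfx]
      constructor
      · rintro hs π' ⟨π, hπ, rfl⟩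
        refine (ih (Function.update Δ x (π, 0)) (Function.update Δ' x (stfr (↑Γ) π, 0)) ?_).mp (hs π hπ)
        intro y hy
        by_cases hyx : y = x
        · subst hyx; right; simp
        · rcases h y hy with h' | h'
          · simp only [List.map_cons, List.mem_cons] at h'
            rcases h' with h'' | h''
            · exact absurd h'' hyx
            · exact Or.inl h''
          · right; simpa [Function.update_of_ne hyx] using h'
      · rintro hs π hπ
        refine (ih (Function.update Δ x (π, 0)) (Function.update Δ' x (stfr (↑Γ) π, 0)) ?_).mpr
          (hs (stfr (↑Γ) π) ⟨π, hπ, rfl⟩)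
        intro y hy
        by_cases hyx : y = x
        · subst hyx; right; simp
        · rcases h y hy with h' | h'
          · simp only [List.map_cons, List.mem_cons] at h'
            rcases h' with h'' | h''
            · exact absurd h'' hyx
            · exact Or.inl h''
          · right; simpa [Function.update_of_ne hyx] using h'

end Aux

theorem stmt2 (AP V : Type) [Fintype AP] [DecidableEq V]
    (Γ : Finset (LTL AP)) (φ : HSSentence AP V) (hcl : φ.Closed)
    (hfr : φ.matrix.InFragment Γ) (L : Set (Trace AP)) :
    φ.Models L ↔
      HSSentence.Models ⟨φ.pre, φ.matrix.toHLTL⟩ (stfr (↑Γ) '' L) := by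
  have key : ∀ Δ Δ' : PTA AP V,
      SatPfx L φ.pre (fun Δ => φ.matrix.Sat Δ) Δ ↔
        SatPfx (stfr (↑Γ) '' L) φ.pre (fun Δ => φ.matrix.toHLTL.Sat Δ) Δ' := by
    intro Δ Δ'
    apply pfx_corr Γ hfr L
    intro x hx
    exact Or.inl (hcl.2 x hx)
  constructor
  · intro hM Δ₀
    exact (key Δ₀ Δ₀).mp (hM Δ₀)
  · intro hM Δ₀
    exact (key Δ₀ Δ₀).mpr (hM Δ₀)
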